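/- arXiv:1509.03231 — 3 statements merged into one kernel-verified Lean document; each statement's English description precedes it below -/
import Mathlib

section
/- There exists a constant C' > 0 such that for all y, ỹ ∈ {−1,1}^{ℤ₊} and all n ∈ ℕ, if y_i = ỹ_i for i = 0,…,n−1 then |w_0(y) − w_0(ỹ)| ≤ C'·|1−2p|^{n}; in particular the function y ↦ w_0(y) is Hölder continuous with respect to the metric d(y,ỹ) = 2^{−k(y,ỹ)}, where k(y,ỹ) is the length of the longest common prefix of y and ỹ. -/
/-!
The map `A` is `|tanh J|`-Lipschitz, since `A' u = (tanh (u + J) - tanh (u - J)) / 2` and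
`cosh (u + J) * cosh (u - J) ≥ cosh J ^ 2`; moreover `tanh J = 1 - 2p`, so the Lipschitz constant
`ρ = |1 - 2p|` is `< 1`. For two inputs agreeing on their first `n` letters, the truncated
recursions differ at index `i < n` by at most `ρ` times their difference at `i + 1`, and that
difference is uniformly at most `2|K| / (1 - ρ)`. So `|w_0^{(m)}(y) - w_0^{(m)}(ỹ)|` is at most
`2|K| ρ^n / (1 - ρ)` for every `m ≥ n`, and this passes to the limit. With `θ = log_{1/2} ρ`
one has `((1/2)^n)^θ = ρ^n`, which is the Hölder form.
-/

open Real Filter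

theorem Real.cosh_sq_le_cosh_add_mul_cosh_sub (u J : ℝ) :
    cosh J ^ 2 ≤ cosh (u + J) * cosh (u - J) := by
  have h : cosh (u + J) * cosh (u - J) = cosh u ^ 2 + sinh J ^ 2 := by
    rw [cosh_add, cosh_sub]
    linear_combination cosh u ^ 2 * cosh_sq J + sinh J ^ 2 * cosh_sq u
  rw [h, cosh_sq J]
  nlinarith [one_le_cosh u]

theorem Real.tanh_add_sub_tanh_sub (u J : ℝ) :
    tanh (u + J) - tanh (u - J) = 2 * sinh J * cosh J / (cosh (u + J) * cosh (u - J)) := by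
  rw [tanh_eq_sinh_div_cosh, tanh_eq_sinh_div_cosh,
    div_sub_div _ _ (cosh_pos _).ne' (cosh_pos _).ne', ← sinh_sub,
    show u + J - (u - J) = 2 * J by ring, sinh_two_mul]

theorem Real.abs_tanh_add_sub_tanh_sub_le (u J : ℝ) :
    |tanh (u + J) - tanh (u - J)| ≤ 2 * |tanh J| := by
  have hJ := cosh_pos J
  rw [tanh_add_sub_tanh_sub, abs_div, abs_of_pos (mul_pos (cosh_pos _) (cosh_pos _)),
    div_le_iff₀ (mul_pos (cosh_pos _) (cosh_pos _)), tanh_eq_sinh_div_cosh, abs_div,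
    abs_of_pos hJ, abs_mul, abs_mul, abs_two, abs_of_pos hJ]
  calc 2 * |sinh J| * cosh J = 2 * (|sinh J| / cosh J) * cosh J ^ 2 := by
        field_simp
    _ ≤ 2 * (|sinh J| / cosh J) * (cosh (u + J) * cosh (u - J)) := by
        gcongr; exact cosh_sq_le_cosh_add_mul_cosh_sub u J

theorem Real.hasDerivAt_half_log_cosh_div (J u : ℝ) :
    HasDerivAt (fun x => 1 / 2 * log (cosh (x + J) / cosh (x - J)))
      ((tanh (u + J) - tanh (u - J)) / 2) u := by
  have hplus := ((hasDerivAt_cosh (u + J)).comp_add_const u J).log (cosh_pos _).ne'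
  have hminus := ((hasDerivAt_cosh (u - J)).comp_sub_const u J).log (cosh_pos _).ne'
  have hfun : (fun x => 1 / 2 * log (cosh (x + J) / cosh (x - J)))
      = fun x => 1 / 2 * (log (cosh (x + J)) - log (cosh (x - J))) := by
    ext x
    rw [log_div (cosh_pos _).ne' (cosh_pos _).ne']
  rw [hfun, tanh_eq_sinh_div_cosh, tanh_eq_sinh_div_cosh]
  exact ((hplus.sub hminus).const_mul (1 / 2)).congr_deriv (by ring)

theorem Real.abs_half_log_cosh_div_sub_le (J u v : ℝ) :
    |1 / 2 * log (cosh (u + J) / cosh (u - J)) - 1 / 2 * log (cosh (v + J) / cosh (v - J))|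
      ≤ |tanh J| * |u - v| := by
  have := Convex.norm_image_sub_le_of_norm_hasDerivWithin_le (C := |tanh J|)
    (fun x _ => (hasDerivAt_half_log_cosh_div J x).hasDerivWithinAt) (fun x _ => ?_)
    convex_univ (Set.mem_univ v) (Set.mem_univ u)
  · simpa only [Real.norm_eq_abs] using this
  · rw [Real.norm_eq_abs, abs_div, abs_two]
    linarith [abs_tanh_add_sub_tanh_sub_le x J]

theorem Real.tanh_half_log_one_sub_div (p : ℝ) (hp0 : 0 < p) (hp1 : p < 1) :
    tanh (1 / 2 * log ((1 - p) / p)) = 1 - 2 * p := by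
  have h : (1 + (1 - 2 * p)) / (1 - (1 - 2 * p)) = (1 - p) / p := by
    field_simp; ring
  rw [← h, ← artanh_eq_half_log ⟨by linarith, by linarith⟩, tanh_artanh ⟨by linarith, by linarith⟩]

theorem Real.pow_rpow_logb {b x : ℝ} (hb0 : 0 < b) (hb1 : b ≠ 1) (hx : 0 < x) (n : ℕ) :
    (b ^ n) ^ logb b x = x ^ n := by
  rw [← rpow_natCast, ← rpow_mul hb0.le, mul_comm, rpow_mul hb0.le, rpow_logb hb0 hb1 hx,
    rpow_natCast]

section BackwardRecursion

variable {A : ℝ → ℝ} {ρ : ℝ}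

theorem abs_sub_le_pow_mul_of_lipschitz (hρ : 0 ≤ ρ) (hA : ∀ u v, |A u - A v| ≤ ρ * |u - v|)
    {a b c : ℕ → ℝ} {n : ℕ} (ha : ∀ i < n, a i = c i + A (a (i + 1)))
    (hb : ∀ i < n, b i = c i + A (b (i + 1))) :
    |a 0 - b 0| ≤ ρ ^ n * |a n - b n| := by
  induction n with
  | zero => simp
  | succ n ih =>
    have hstep : |a n - b n| ≤ ρ * |a (n + 1) - b (n + 1)| := by
      rw [ha n n.lt_succ_self, hb n n.lt_succ_self, add_sub_add_left_eq_sub]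
      exact hA _ _
    calc |a 0 - b 0| ≤ ρ ^ n * |a n - b n| :=
          ih (fun i hi => ha i (hi.trans n.lt_succ_self))
            (fun i hi => hb i (hi.trans n.lt_succ_self))
      _ ≤ ρ ^ n * (ρ * |a (n + 1) - b (n + 1)|) := by gcongr
      _ = ρ ^ (n + 1) * |a (n + 1) - b (n + 1)| := by ring

theorem abs_sub_le_div_one_sub_of_lipschitz (hρ0 : 0 ≤ ρ) (hρ1 : ρ < 1)
    (hA : ∀ u v, |A u - A v| ≤ ρ * |u - v|) {a b c c' : ℕ → ℝ} {M : ℝ} {m : ℕ}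
    (hc : ∀ i ≤ m, |c i - c' i| ≤ M) (ha : ∀ i ≤ m, a i = c i + A (a (i + 1)))
    (hb : ∀ i ≤ m, b i = c' i + A (b (i + 1))) (hend : a (m + 1) = b (m + 1)) :
    ∀ i ≤ m + 1, |a i - b i| ≤ M / (1 - ρ) := by
  have hpos : 0 < 1 - ρ := sub_pos.2 hρ1
  have hM : 0 ≤ M := (abs_nonneg _).trans (hc 0 m.zero_le)
  intro i hi
  induction hi using Nat.decreasingInduction with
  | self => rw [hend, sub_self, abs_zero]; exact div_nonneg hM hpos.le
  | of_succ i hlt ih =>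
    have hi : i ≤ m := Nat.lt_succ_iff.1 hlt
    calc |a i - b i| = |(c i - c' i) + (A (a (i + 1)) - A (b (i + 1)))| := by
          rw [ha i hi, hb i hi]
          congr 1
          ring
      _ ≤ M + ρ * (M / (1 - ρ)) := by
          refine (abs_add_le _ _).trans (add_le_add (hc i hi) ((hA _ _).trans ?_))
          gcongr
      _ = M / (1 - ρ) := by field_simp; ring

theorem abs_sub_le_mul_pow_of_eqOn_prefix (hρ0 : 0 ≤ ρ) (hρ1 : ρ < 1)
    (hA : ∀ u v, |A u - A v| ≤ ρ * |u - v|) {K : ℝ} {y y' a b : ℕ → ℝ} {m n : ℕ}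
    (hy : ∀ i, |y i| ≤ 1) (hy' : ∀ i, |y' i| ≤ 1)
    (ha : ∀ i ≤ m, a i = K * y i + A (a (i + 1)))
    (hb : ∀ i ≤ m, b i = K * y' i + A (b (i + 1)))
    (hend : a (m + 1) = b (m + 1)) (hnm : n ≤ m) (hagree : ∀ i < n, y i = y' i) :
    |a 0 - b 0| ≤ 2 * |K| / (1 - ρ) * ρ ^ n := by
  have hc : ∀ i ≤ m, |K * y i - K * y' i| ≤ 2 * |K| := fun i _ => by
    rw [← mul_sub, abs_mul, mul_comm]
    gcongr
    linarith [abs_sub (y i) (y' i), hy i, hy' i]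
  calc |a 0 - b 0| ≤ ρ ^ n * |a n - b n| :=
        abs_sub_le_pow_mul_of_lipschitz hρ0 hA (fun i hi => ha i (by omega))
          (fun i hi => hagree i hi ▸ hb i (by omega))
    _ ≤ ρ ^ n * (2 * |K| / (1 - ρ)) := by
        gcongr
        exact abs_sub_le_div_one_sub_of_lipschitz hρ0 hρ1 hA hc ha hb hend n (by omega)
    _ = 2 * |K| / (1 - ρ) * ρ ^ n := mul_comm _ _

end BackwardRecursion

theorem stmt_6_general (p : ℝ) (hp0 : 0 < p) (hp1 : p < 1) (hp2 : p ≠ 1 / 2)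
    (J K : ℝ)
    (hJ : J = (1 / 2) * Real.log ((1 - p) / p))
    (A : ℝ → ℝ)
    (hA : ∀ u, A u = (1 / 2) * Real.log (Real.cosh (u + J) / Real.cosh (u - J)))
    (W : (ℕ → ℝ) → ℕ → ℕ → ℝ)
    (hW0 : ∀ (y : ℕ → ℝ) (n i : ℕ), n < i → W y n i = 0)
    (hWrec : ∀ (y : ℕ → ℝ) (n i : ℕ), i ≤ n → W y n i = K * y i + A (W y n (i + 1)))
    (w0 : (ℕ → ℝ) → ℝ)
    (hw0 : ∀ y : ℕ → ℝ, (∀ i, y i = 1 ∨ y i = -1) →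
      Filter.Tendsto (fun n => W y n 0) Filter.atTop (nhds (w0 y))) :
    ∃ C' > (0 : ℝ),
      (∀ y ytil : ℕ → ℝ, (∀ i, y i = 1 ∨ y i = -1) → (∀ i, ytil i = 1 ∨ ytil i = -1) →
        ∀ n : ℕ, (∀ i < n, y i = ytil i) →
          |w0 y - w0 ytil| ≤ C' * |1 - 2 * p| ^ n) ∧
      ∃ θ > (0 : ℝ), ∃ C'' > (0 : ℝ),
        ∀ y ytil : ℕ → ℝ, (∀ i, y i = 1 ∨ y i = -1) → (∀ i, ytil i = 1 ∨ ytil i = -1) →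
          ∀ n : ℕ, (∀ i < n, y i = ytil i) → y n ≠ ytil n →
            |w0 y - w0 ytil| ≤ C'' * ((1 / 2 : ℝ) ^ n) ^ θ := by
  set ρ := |1 - 2 * p|
  have htanh : |tanh J| = ρ := by rw [hJ, tanh_half_log_one_sub_div p hp0 hp1]
  have hρ0 : 0 < ρ := abs_pos.2 fun h => hp2 (by linarith)
  have hρ1 : ρ < 1 := htanh ▸ abs_tanh_lt_one J
  have hAlip : ∀ u v, |A u - A v| ≤ ρ * |u - v| := fun u v => by
    simpa only [hA, htanh] using abs_half_log_cosh_div_sub_le J u v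
  have hbounded : ∀ y : ℕ → ℝ, (∀ i, y i = 1 ∨ y i = -1) → ∀ i, |y i| ≤ 1 := fun y hy i => by
    rcases hy i with h | h <;> simp [h]
  set C := 2 * |K| / (1 - ρ) + 1
  have hC : 0 < C := by have := sub_pos.2 hρ1; positivity
  have hbound : ∀ y ytil : ℕ → ℝ, (∀ i, y i = 1 ∨ y i = -1) → (∀ i, ytil i = 1 ∨ ytil i = -1) →
      ∀ n : ℕ, (∀ i < n, y i = ytil i) → |w0 y - w0 ytil| ≤ C * ρ ^ n := by
    intro y ytil hy hytil n hagree
    refine le_of_tendsto ((hw0 y hy).sub (hw0 ytil hytil)).abs ?_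
    filter_upwards [eventually_ge_atTop n] with m hnm
    refine (abs_sub_le_mul_pow_of_eqOn_prefix hρ0.le hρ1 hAlip (hbounded y hy)
      (hbounded ytil hytil) (fun i => hWrec y m i) (fun i => hWrec ytil m i)
      (by rw [hW0 y m _ m.lt_succ_self, hW0 ytil m _ m.lt_succ_self]) hnm hagree).trans ?_
    gcongr
    linarith
  refine ⟨C, hC, hbound, logb (1 / 2) ρ,
    logb_pos_of_base_lt_one (by norm_num) (by norm_num) hρ0 hρ1, C, hC,
    fun y ytil hy hytil n hagree _ => ?_⟩
  rw [pow_rpow_logb (by norm_num) (by norm_num) hρ0]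
  exact hbound y ytil hy hytil n hagree

/-- There exists `C' > 0` such that for all `y, ỹ ∈ {−1,1}^{ℤ₊}` and all
`n ∈ ℕ`, if `y_i = ỹ_i` for `i = 0,…,n−1` then `|w_0(y) − w_0(ỹ)| ≤ C'·|1−2p|^n`;
in particular `y ↦ w_0(y)` is Hölder continuous with respect to the metric
`d(y,ỹ) = 2^{−k(y,ỹ)}` where `k(y,ỹ)` is the length of the longest common prefix
(the Hölder estimate is expressed via that exact prefix length `n`, for which
`d(y,ỹ) = (1/2)^n`). Here `W y n i = w_i^{(n)}(y)` and `w0 y = w_0(y)`. -/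
theorem stmt_6 (p ε : ℝ) (hp0 : 0 < p) (hp1 : p < 1) (hp2 : p ≠ 1 / 2)
    (hε0 : 0 < ε) (hε1 : ε < 1)
    (J K : ℝ)
    (hJ : J = (1 / 2) * Real.log ((1 - p) / p))
    (hK : K = (1 / 2) * Real.log ((1 - ε) / ε))
    (A : ℝ → ℝ)
    (hA : ∀ u, A u = (1 / 2) * Real.log (Real.cosh (u + J) / Real.cosh (u - J)))
    (W : (ℕ → ℝ) → ℕ → ℕ → ℝ)
    (hW0 : ∀ (y : ℕ → ℝ) (n i : ℕ), n < i → W y n i = 0)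
    (hWrec : ∀ (y : ℕ → ℝ) (n i : ℕ), i ≤ n → W y n i = K * y i + A (W y n (i + 1)))
    (w0 : (ℕ → ℝ) → ℝ)
    (hw0 : ∀ y : ℕ → ℝ, (∀ i, y i = 1 ∨ y i = -1) →
      Filter.Tendsto (fun n => W y n 0) Filter.atTop (nhds (w0 y))) :
    ∃ C' > (0 : ℝ),
      (∀ y ytil : ℕ → ℝ, (∀ i, y i = 1 ∨ y i = -1) → (∀ i, ytil i = 1 ∨ ytil i = -1) →
        ∀ n : ℕ, (∀ i < n, y i = ytil i) →
          |w0 y - w0 ytil| ≤ C' * |1 - 2 * p| ^ n) ∧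
      ∃ θ > (0 : ℝ), ∃ C'' > (0 : ℝ),
        ∀ y ytil : ℕ → ℝ, (∀ i, y i = 1 ∨ y i = -1) → (∀ i, ytil i = 1 ∨ ytil i = -1) →
          ∀ n : ℕ, (∀ i < n, y i = ytil i) → y n ≠ ytil n →
            |w0 y - w0 ytil| ≤ C'' * ((1 / 2 : ℝ) ^ n) ^ θ :=
  stmt_6_general p hp0 hp1 hp2 J K hJ A hA W hW0 hWrec w0 hw0
end

section
/- There exist constants C > 0 and ρ ∈ (0,1) such that for every y ∈ {−1,1}^{ℤ₊} and every n ≥ 1, | Z_{0,n}(y_0,…,y_n)/(λ·Z_{1,n}(y_1,…,y_n)) − g(y) | ≤ C·ρⁿ, where g(y) = (1/λ)·cosh(w_0(y))·exp(B(w_1(y)))/cosh(w_1(y)); i.e., the conditional probabilities Q(y_0 | y_1,…,y_n) converge uniformly and exponentially fast to the continuous positive function g, so Q is a g-measure. -/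
/-
Peeling off the first spin of the chain and using `2 cosh (v + J s) = exp (A(v) s + B(v))` for
`s = ±1`, induction on the length gives `Z_{0,n} = 2 cosh (w_0^{(n)}) exp (∑_{i=1}^n B(w_i^{(n)}))`.
Hence `Z_{0,n} / Z_{1,n} = cosh (w_0^{(n)}) exp (B(w_1^{(n)})) / cosh (w_1^{(n)})` exactly. Since
`A' = (tanh (u + J) - tanh (u - J)) / 2`, the map `A` is a contraction with constant `|tanh J| < 1`
and `|A| ≤ |J|`, so `|w_i^{(n)} - w_i| ≤ |J| |tanh J|^{n-i}`. Finally `log cosh` and `B` are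
`1`-Lipschitz, so the ratio is Lipschitz in `(w_0, w_1)` on bounded sets.
-/

open Finset Real Filter Topology

lemma abs_sub_le_of_hasDerivAt {f f' : ℝ → ℝ} {C : ℝ} (hf : ∀ x, HasDerivAt f (f' x) x)
    (hC : ∀ x, |f' x| ≤ C) (u v : ℝ) : |f u - f v| ≤ C * |u - v| := by
  simpa only [Real.norm_eq_abs] using Convex.norm_image_sub_le_of_norm_hasDerivWithin_le
    (fun x _ => (hf x).hasDerivWithinAt) (fun x _ => hC x) convex_univ (Set.mem_univ v)
    (Set.mem_univ u)

lemma sum_fin_tuple_eq_sum_cons {β M : Type*} [Fintype β] [AddCommMonoid M] {n : ℕ}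
    (F : (Fin (n + 1) → β) → M) :
    ∑ x, F x = ∑ b, ∑ x : Fin n → β, F (Fin.cons b x) := by
  rw [← Fintype.sum_prod_type']
  exact (Fintype.sum_equiv (Fin.consEquiv fun _ => β) _ _ fun _ => rfl).symm

namespace Real

lemma abs_exp_sub_exp_le (a b : ℝ) : |exp a - exp b| ≤ exp (max a b) * |a - b| := by
  wlog hab : a ≤ b generalizing a b
  · rw [abs_sub_comm, abs_sub_comm a, max_comm]
    exact this b a (le_of_not_ge hab)
  have hexp : exp a = exp b * exp (a - b) := by rw [← exp_add, add_sub_cancel]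
  rw [max_eq_right hab, abs_of_nonpos (by rw [sub_nonpos]; exact exp_le_exp.2 hab),
    abs_of_nonpos (by linarith), hexp]
  nlinarith [add_one_le_exp (a - b), exp_pos b]

lemma hasDerivAt_log_cosh (x : ℝ) : HasDerivAt (fun y => log (cosh y)) (tanh x) x := by
  simpa [tanh_eq_sinh_div_cosh] using (hasDerivAt_cosh x).log (cosh_pos x).ne'

lemma abs_log_cosh_sub_le (u v : ℝ) : |log (cosh u) - log (cosh v)| ≤ |u - v| := by
  simpa using abs_sub_le_of_hasDerivAt hasDerivAt_log_cosh (fun x => (abs_tanh_lt_one x).le) u v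

lemma log_cosh_le_abs (u : ℝ) : log (cosh u) ≤ |u| := by
  simpa using (le_abs_self _).trans (abs_log_cosh_sub_le u 0)

lemma abs_tanh_add_sub_tanh_sub_le_s13 (J u : ℝ) : |tanh (u + J) - tanh (u - J)| ≤ 2 * |tanh J| := by
  have hcJ := cosh_pos J
  have hprod : cosh (u + J) * cosh (u - J) = cosh u ^ 2 + sinh J ^ 2 := by
    rw [cosh_add, cosh_sub]
    nlinarith [cosh_sq u, cosh_sq J]
  have hdiff : tanh (u + J) - tanh (u - J) = 2 * sinh J * cosh J / (cosh u ^ 2 + sinh J ^ 2) := by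
    rw [tanh_eq_sinh_div_cosh, tanh_eq_sinh_div_cosh, div_sub_div _ _ (cosh_pos _).ne'
      (cosh_pos _).ne', hprod, ← sinh_sub, ← sinh_two_mul]
    ring_nf
  have hden : cosh J ^ 2 ≤ cosh u ^ 2 + sinh J ^ 2 := by
    nlinarith [cosh_sq u, cosh_sq J, sq_nonneg (sinh u)]
  have hden_pos : 0 < cosh u ^ 2 + sinh J ^ 2 := (by positivity : 0 < cosh J ^ 2).trans_le hden
  rw [hdiff, abs_div, abs_mul, abs_mul, abs_two, abs_of_pos hcJ, abs_of_pos hden_pos,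
    tanh_eq_sinh_div_cosh, abs_div, abs_of_pos hcJ, div_le_iff₀ hden_pos]
  calc 2 * |sinh J| * cosh J = 2 * (|sinh J| / cosh J) * cosh J ^ 2 := by field_simp
    _ ≤ 2 * (|sinh J| / cosh J) * (cosh u ^ 2 + sinh J ^ 2) := by gcongr

lemma tanh_ne_zero {x : ℝ} (hx : x ≠ 0) : tanh x ≠ 0 := by
  rw [tanh_eq_sinh_div_cosh]
  exact div_ne_zero (sinh_ne_zero.2 hx) (cosh_pos x).ne'

lemma log_one_sub_div_ne_zero {p : ℝ} (hp0 : 0 < p) (hp1 : p < 1) (hp2 : p ≠ 1 / 2) :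
    log ((1 - p) / p) ≠ 0 := by
  refine log_ne_zero_of_pos_of_ne_one (div_pos (by linarith) hp0) ?_
  rw [ne_eq, div_eq_one_iff_eq hp0.ne']
  contrapose! hp2
  linarith

end Real

namespace IsingHMM

def spin (b : Bool) : ℝ := if b then 1 else -1

lemma sum_exp_mul_spin (a : ℝ) : ∑ b : Bool, exp (a * spin b) = 2 * cosh a := by
  simp only [Fintype.sum_bool, spin, if_true, Bool.false_eq_true, if_false, mul_one, mul_neg,
    cosh_eq]
  ring

noncomputable def A (J u : ℝ) : ℝ := (1 / 2) * log (cosh (u + J) / cosh (u - J))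

noncomputable def B (J u : ℝ) : ℝ := (1 / 2) * log (4 * cosh (u + J) * cosh (u - J))

lemma A_eq (J u : ℝ) : A J u = (log (cosh (u + J)) - log (cosh (u - J))) / 2 := by
  rw [A, log_div (cosh_pos _).ne' (cosh_pos _).ne']
  ring

lemma B_eq (J u : ℝ) : B J u = log 2 + (log (cosh (u + J)) + log (cosh (u - J))) / 2 := by
  have h4 : log 4 = 2 * log 2 := by
    rw [show (4 : ℝ) = 2 ^ 2 by norm_num, log_pow]
    norm_num
  rw [B, log_mul (by positivity) (cosh_pos _).ne', log_mul (by norm_num) (cosh_pos _).ne', h4]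
  ring

lemma A_zero (J : ℝ) : A J 0 = 0 := by
  simp [A_eq]

lemma abs_A_le (J u : ℝ) : |A J u| ≤ |J| := by
  rw [A_eq, abs_div, abs_two, div_le_iff₀ two_pos]
  calc _ ≤ |u + J - (u - J)| := abs_log_cosh_sub_le _ _
    _ = |J| * 2 := by rw [show u + J - (u - J) = 2 * J by ring, abs_mul, abs_two, mul_comm]

lemma abs_A_sub_le (J u v : ℝ) : |A J u - A J v| ≤ |tanh J| * |u - v| := by
  have hderiv (x : ℝ) : HasDerivAt (A J) ((tanh (x + J) - tanh (x - J)) / 2) x := by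
    have h := (((hasDerivAt_log_cosh (x + J)).comp x ((hasDerivAt_id x).add_const J)).sub
      ((hasDerivAt_log_cosh (x - J)).comp x ((hasDerivAt_id x).sub_const J))).div_const 2
    simp only [mul_one] at h
    exact h.congr_of_eventuallyEq (Eventually.of_forall fun y => A_eq J y)
  refine abs_sub_le_of_hasDerivAt hderiv (fun x => ?_) u v
  rw [abs_div, abs_two, div_le_iff₀ two_pos, mul_comm]
  exact abs_tanh_add_sub_tanh_sub_le_s13 J x

lemma abs_B_sub_le (J u v : ℝ) : |B J u - B J v| ≤ |u - v| := by
  have h1 := abs_le.1 (abs_log_cosh_sub_le (u + J) (v + J))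
  have h2 := abs_le.1 (abs_log_cosh_sub_le (u - J) (v - J))
  rw [add_sub_add_right_eq_sub] at h1
  rw [sub_sub_sub_cancel_right] at h2
  rw [B_eq, B_eq, abs_le]
  constructor <;> linarith

lemma B_sub_log_cosh_le (J v : ℝ) : B J v - log (cosh v) ≤ log 2 + |J| := by
  have h1 := abs_log_cosh_sub_le (v + J) v
  have h2 := abs_log_cosh_sub_le (v - J) v
  simp only [add_sub_cancel_left, sub_sub_cancel_left, abs_neg] at h1 h2
  rw [B_eq]
  linarith [le_abs_self (log (cosh (v + J)) - log (cosh v)),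
    le_abs_self (log (cosh (v - J)) - log (cosh v))]

/-- Summing out a spin coupled through `J` to the spin `s`, in the field `v`, leaves the field
`A J v` on `s` and the factor `exp (B J v)`. -/
lemma two_mul_cosh_add_mul_spin (J v : ℝ) (b : Bool) :
    2 * cosh (v + J * spin b) = exp (A J v * spin b + B J v) := by
  have h2 : log 2 + log (cosh (v + J)) = log (2 * cosh (v + J)) :=
    (log_mul two_ne_zero (cosh_pos _).ne').symm
  have h2' : log 2 + log (cosh (v - J)) = log (2 * cosh (v - J)) :=
    (log_mul two_ne_zero (cosh_pos _).ne').symm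
  cases b
  · rw [show A J v * spin false + B J v = log 2 + log (cosh (v - J)) by
      simp only [A_eq, B_eq, spin]; norm_num; ring, h2', exp_log (by positivity)]
    simp [spin, sub_eq_add_neg]
  · rw [show A J v * spin true + B J v = log 2 + log (cosh (v + J)) by
      simp only [A_eq, B_eq, spin]; norm_num; ring, h2, exp_log (by positivity)]
    simp [spin]

/-- `partitionFn J n 0 (fun i => K * y i)` is `Z_{0,n}(y)`. The extra field `t` on site `0` is
what summing out a left neighbour leaves behind. -/
noncomputable def partitionFn (J : ℝ) (n : ℕ) (t : ℝ) (f : ℕ → ℝ) : ℝ :=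
  ∑ x : Fin (n + 1) → Bool, exp (t * spin (x 0)
    + J * ∑ i : Fin n, spin (x i.castSucc) * spin (x i.succ) + ∑ i, spin (x i) * f i)

lemma partitionFn_succ (J : ℝ) (n : ℕ) (t : ℝ) (f : ℕ → ℝ) :
    partitionFn J (n + 1) t f
      = ∑ b, exp (spin b * (t + f 0)) * partitionFn J n (J * spin b) fun j => f (j + 1) := by
  simp only [partitionFn, mul_sum, ← exp_add]
  rw [sum_fin_tuple_eq_sum_cons]
  refine sum_congr rfl fun b _ => sum_congr rfl fun x _ => congrArg exp ?_
  simp only [Fin.sum_univ_succ (n := n), Fin.sum_univ_succ (n := n + 1), Fin.cons_zero,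
    Fin.cons_succ, Fin.castSucc_zero, ← Fin.succ_castSucc, Fin.val_zero, Fin.val_succ]
  ring

lemma sum_exp_eq_partitionFn (J K : ℝ) (n : ℕ) (y : ℕ → ℝ) :
    ∑ x : Fin (n + 1) → Bool, exp (J * ∑ i : Fin n, spin (x i.castSucc) * spin (x i.succ)
      + K * ∑ i, spin (x i) * y i) = partitionFn J n 0 fun i => K * y i := by
  simp only [partitionFn, zero_mul, zero_add, mul_sum, mul_left_comm K]

/-- `cavityField J (n - i) (fun j => K * y (i + j))` is the field `w_i^{(n)}(y)`. -/
noncomputable def cavityField (J : ℝ) : ℕ → (ℕ → ℝ) → ℝ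
  | 0, f => f 0
  | n + 1, f => f 0 + A J (cavityField J n fun j => f (j + 1))

/-- `cavityEnergy J n f = ∑_{i=1}^n B(w_i)`, in the notation of `cavityField`. -/
noncomputable def cavityEnergy (J : ℝ) : ℕ → (ℕ → ℝ) → ℝ
  | 0, _ => 0
  | n + 1, f => B J (cavityField J n fun j => f (j + 1)) + cavityEnergy J n fun j => f (j + 1)

theorem partitionFn_eq (J : ℝ) (n : ℕ) (t : ℝ) (f : ℕ → ℝ) :
    partitionFn J n t f = 2 * cosh (t + cavityField J n f) * exp (cavityEnergy J n f) := by
  induction n generalizing t f with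
  | zero =>
    rw [partitionFn, sum_fin_tuple_eq_sum_cons, cavityEnergy, exp_zero, mul_one,
      ← sum_exp_mul_spin]
    refine sum_congr rfl fun b _ => ?_
    simp [cavityField, add_mul, mul_comm (spin b)]
  | succ n ih =>
    have hterm (b : Bool) :
        exp (spin b * (t + f 0)) * partitionFn J n (J * spin b) (fun j => f (j + 1))
          = exp ((t + cavityField J (n + 1) f) * spin b) * exp (cavityEnergy J (n + 1) f) := by
      rw [ih, add_comm (J * spin b), two_mul_cosh_add_mul_spin]
      simp only [← exp_add, cavityField, cavityEnergy]
      ring_nf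
    rw [partitionFn_succ, sum_congr rfl fun b _ => hterm b, ← sum_mul, sum_exp_mul_spin]

noncomputable def condWeight (J u v : ℝ) : ℝ := cosh u * exp (B J v) / cosh v

theorem partitionFn_succ_div (J : ℝ) (n : ℕ) (f : ℕ → ℝ) :
    partitionFn J (n + 1) 0 f / partitionFn J n 0 (fun j => f (j + 1))
      = condWeight J (cavityField J (n + 1) f) (cavityField J n fun j => f (j + 1)) := by
  rw [partitionFn_eq, partitionFn_eq, condWeight, cavityEnergy, exp_add, zero_add, zero_add]
  field_simp

lemma condWeight_eq_exp (J u v : ℝ) :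
    condWeight J u v = exp (log (cosh u) + (B J v - log (cosh v))) := by
  rw [condWeight, exp_add, exp_sub, exp_log (cosh_pos u), exp_log (cosh_pos v), mul_div_assoc]

lemma condWeight_pos (J u v : ℝ) : 0 < condWeight J u v := by
  rw [condWeight_eq_exp]
  exact exp_pos _

lemma abs_condWeight_sub_le {J R u u' : ℝ} (hu : |u| ≤ R) (hu' : |u'| ≤ R) (v v' : ℝ) :
    |condWeight J u v - condWeight J u' v'|
      ≤ 2 * exp (R + |J|) * (|u - u'| + 2 * |v - v'|) := by
  have hbound {u : ℝ} (hu : |u| ≤ R) (v : ℝ) :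
      log (cosh u) + (B J v - log (cosh v)) ≤ log 2 + (R + |J|) := by
    linarith [log_cosh_le_abs u, B_sub_log_cosh_le J v]
  have hlip : |log (cosh u) + (B J v - log (cosh v)) - (log (cosh u') + (B J v' - log (cosh v')))|
      ≤ |u - u'| + 2 * |v - v'| := by
    have h1 := abs_le.1 (abs_log_cosh_sub_le u u')
    have h2 := abs_le.1 (abs_B_sub_le J v v')
    have h3 := abs_le.1 (abs_log_cosh_sub_le v v')
    rw [abs_le]
    constructor <;> linarith
  rw [condWeight_eq_exp, condWeight_eq_exp]
  calc _ ≤ exp (log 2 + (R + |J|)) * (|u - u'| + 2 * |v - v'|) :=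
        (abs_exp_sub_exp_le _ _).trans (mul_le_mul (exp_le_exp.2 (max_le (hbound hu v)
          (hbound hu' v'))) hlip (abs_nonneg _) (exp_pos _).le)
    _ = 2 * exp (R + |J|) * (|u - u'| + 2 * |v - v'|) := by rw [exp_add, exp_log two_pos]

lemma abs_cavityField_le (J : ℝ) (n : ℕ) (f : ℕ → ℝ) : |cavityField J n f| ≤ |f 0| + |J| := by
  cases n with
  | zero => simp [cavityField]
  | succ n => exact (abs_add_le _ _).trans (add_le_add_right (abs_A_le J _) _)

lemma abs_cavityField_sub_le (J : ℝ) {n n' : ℕ} (h : n ≤ n') (f : ℕ → ℝ) :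
    |cavityField J n f - cavityField J n' f| ≤ |tanh J| ^ n * |J| := by
  induction n generalizing n' f with
  | zero =>
    cases n' with
    | zero => simp
    | succ n' => simpa [cavityField] using abs_A_le J _
  | succ n ih =>
    obtain ⟨n', rfl⟩ := Nat.exists_eq_add_of_le' (Nat.lt_of_lt_of_le n.succ_pos h)
    simp only [cavityField, add_sub_add_left_eq_sub]
    calc _ ≤ |tanh J| * |cavityField J n (fun j => f (j + 1))
            - cavityField J n' fun j => f (j + 1)| := abs_A_sub_le J _ _
      _ ≤ |tanh J| * (|tanh J| ^ n * |J|) := by gcongr; exact ih (by omega) _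
      _ = |tanh J| ^ (n + 1) * |J| := by ring

lemma abs_cavityField_sub_le_of_tendsto {J L : ℝ} {f : ℕ → ℝ}
    (hL : Tendsto (fun n => cavityField J n f) atTop (𝓝 L)) (n : ℕ) :
    |cavityField J n f - L| ≤ |tanh J| ^ n * |J| :=
  le_of_tendsto ((tendsto_const_nhds.sub hL).abs)
    ((eventually_ge_atTop n).mono fun _ h => abs_cavityField_sub_le J h f)

lemma eq_cavityField {J : ℝ} {f : ℕ → ℝ} {w : ℕ → ℕ → ℝ}
    (hw0 : ∀ n i, n < i → w n i = 0) (hrec : ∀ n i, i ≤ n → w n i = f i + A J (w n (i + 1)))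
    {n i : ℕ} (hi : i ≤ n) : w n i = cavityField J (n - i) fun j => f (i + j) := by
  obtain ⟨k, rfl⟩ := Nat.exists_eq_add_of_le hi
  rw [Nat.add_sub_cancel_left]
  induction k generalizing i with
  | zero => simp [hrec i i le_rfl, hw0 i (i + 1) (by omega), A_zero, cavityField]
  | succ k ih =>
    rw [hrec _ i (by omega), cavityField, add_zero, show i + (k + 1) = i + 1 + k by ring,
      ih (by omega)]
    simp only [add_assoc, add_comm 1]

lemma tendsto_cavityField {J : ℝ} {f L : ℕ → ℝ} {w : ℕ → ℕ → ℝ}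
    (hw0 : ∀ n i, n < i → w n i = 0) (hrec : ∀ n i, i ≤ n → w n i = f i + A J (w n (i + 1)))
    (hL : ∀ i, Tendsto (fun n => w n i) atTop (𝓝 (L i))) (i : ℕ) :
    Tendsto (fun n => cavityField J n fun j => f (i + j)) atTop (𝓝 (L i)) :=
  ((tendsto_add_atTop_iff_nat i).2 (hL i)).congr fun n => by
    rw [eq_cavityField hw0 hrec (Nat.le_add_left i n), Nat.add_sub_cancel]

theorem abs_partitionFn_div_sub_condWeight_le {J R L₀ L₁ : ℝ} {f : ℕ → ℝ} (hf : |f 0| ≤ R)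
    (h₀ : Tendsto (fun n => cavityField J n f) atTop (𝓝 L₀))
    (h₁ : Tendsto (fun n => cavityField J n fun j => f (j + 1)) atTop (𝓝 L₁)) (m : ℕ) :
    |partitionFn J (m + 1) 0 f / partitionFn J m 0 (fun j => f (j + 1)) - condWeight J L₀ L₁|
      ≤ 6 * exp (R + |J| + |J|) * |J| * |tanh J| ^ m := by
  have hbound (n : ℕ) : |cavityField J n f| ≤ R + |J| :=
    (abs_cavityField_le J n f).trans (by linarith)
  have hρ := mul_le_mul_of_nonneg_right (pow_le_pow_of_le_one (abs_nonneg _)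
    (abs_tanh_lt_one J).le (m.le_add_right 1)) (abs_nonneg J)
  rw [partitionFn_succ_div]
  calc _ ≤ 2 * exp (R + |J| + |J|) * (|tanh J| ^ (m + 1) * |J| + 2 * (|tanh J| ^ m * |J|)) := by
        refine (abs_condWeight_sub_le (hbound _)
          (le_of_tendsto h₀.abs (Eventually.of_forall hbound)) _ _).trans ?_
        gcongr
        exacts [abs_cavityField_sub_le_of_tendsto h₀ _, abs_cavityField_sub_le_of_tendsto h₁ _]
    _ ≤ 2 * exp (R + |J| + |J|) * (3 * (|tanh J| ^ m * |J|)) := by gcongr; linarith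
    _ = _ := by ring

end IsingHMM

theorem stmt_13_general (p : ℝ) (hp0 : 0 < p) (hp1 : p < 1) (hp2 : p ≠ 1 / 2)
    (J K lam : ℝ)
    (hJ : J = (1 / 2) * Real.log ((1 - p) / p))
    (hlam : lam = 4 * Real.cosh J * Real.cosh K)
    (A B : ℝ → ℝ)
    (hA : ∀ u, A u = (1 / 2) * Real.log (Real.cosh (u + J) / Real.cosh (u - J)))
    (hB : ∀ u, B u = (1 / 2) * Real.log (4 * Real.cosh (u + J) * Real.cosh (u - J)))
    (spin : Bool → ℝ) (hspin : ∀ b, spin b = if b then 1 else -1)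
    (W : (ℕ → ℝ) → ℕ → ℕ → ℝ)
    (hW0 : ∀ (y : ℕ → ℝ) (n i : ℕ), n < i → W y n i = 0)
    (hWrec : ∀ (y : ℕ → ℝ) (n i : ℕ), i ≤ n → W y n i = K * y i + A (W y n (i + 1)))
    (wlim : (ℕ → ℝ) → ℕ → ℝ)
    (hwlim : ∀ (y : ℕ → ℝ) (i : ℕ),
      Filter.Tendsto (fun n => W y n i) Filter.atTop (nhds (wlim y i)))
    (g : (ℕ → ℝ) → ℝ)
    (hg : ∀ y : ℕ → ℝ,
      g y = (1 / lam) * Real.cosh (wlim y 0) * Real.exp (B (wlim y 1))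
              / Real.cosh (wlim y 1)) :
    (∀ y : ℕ → ℝ, (∀ i, y i = 1 ∨ y i = -1) → 0 < g y) ∧
    ∃ C > (0 : ℝ), ∃ ρ ∈ Set.Ioo (0 : ℝ) 1,
      ∀ y : ℕ → ℝ, (∀ i, y i = 1 ∨ y i = -1) → ∀ m : ℕ,
        |(∑ x : Fin (m + 2) → Bool,
            Real.exp (J * ∑ i : Fin (m + 1), spin (x i.castSucc) * spin (x i.succ)
              + K * ∑ i : Fin (m + 2), spin (x i) * y i))
          / (lam * ∑ x : Fin (m + 1) → Bool,
            Real.exp (J * ∑ i : Fin m, spin (x i.castSucc) * spin (x i.succ)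
              + K * ∑ i : Fin (m + 1), spin (x i) * y (1 + i)))
          - g y| ≤ C * ρ ^ (m + 1) := by
  obtain rfl : A = IsingHMM.A J := funext hA
  obtain rfl : B = IsingHMM.B J := funext hB
  obtain rfl : spin = IsingHMM.spin := funext hspin
  have hJ0 : J ≠ 0 := hJ ▸ mul_ne_zero (by norm_num) (log_one_sub_div_ne_zero hp0 hp1 hp2)
  have hρ : 0 < |tanh J| := abs_pos.2 (tanh_ne_zero hJ0)
  have hlam0 : 0 < lam := hlam ▸ by positivity
  have hg' (y : ℕ → ℝ) : g y = IsingHMM.condWeight J (wlim y 0) (wlim y 1) / lam := by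
    rw [hg, IsingHMM.condWeight]
    ring
  refine ⟨fun y _ => hg' y ▸ div_pos (IsingHMM.condWeight_pos _ _ _) hlam0,
    6 * exp (|K| + |J| + |J|) * |J| / (lam * |tanh J|), by positivity, |tanh J|,
    ⟨hρ, abs_tanh_lt_one J⟩, fun y hy m => ?_⟩
  have hlim := IsingHMM.tendsto_cavityField (hW0 y) (hWrec y) (hwlim y)
  have hf : |K * y 0| ≤ |K| := by rcases hy 0 with h | h <;> simp [h]
  rw [IsingHMM.sum_exp_eq_partitionFn, IsingHMM.sum_exp_eq_partitionFn J K m fun j => y (1 + j),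
    mul_comm lam, ← div_div, hg', ← sub_div, abs_div, abs_of_pos hlam0, div_le_iff₀ hlam0]
  have h₀ := hlim 0
  have h₁ := hlim 1
  simp only [zero_add, add_comm 1] at h₀ h₁ ⊢
  refine (IsingHMM.abs_partitionFn_div_sub_condWeight_le hf h₀ h₁ m).trans_eq ?_
  field_simp
  ring

/-- There exist constants `C > 0` and `ρ ∈ (0,1)` such that for every
`y ∈ {−1,1}^{ℤ₊}` and every `n ≥ 1` (encoded `n = m + 1`),
`| Z_{0,n}(y_0,…,y_n)/(λ·Z_{1,n}(y_1,…,y_n)) − g(y) | ≤ C·ρⁿ`, where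
`g(y) = (1/λ)·cosh(w_0(y))·exp(B(w_1(y)))/cosh(w_1(y))`; i.e., the conditional
probabilities `Q(y_0 | y_1,…,y_n)` converge uniformly and exponentially fast to the
continuous positive function `g`, so `Q` is a `g`-measure. Here `W y n i = w_i^{(n)}(y)`
and `wlim y i = w_i(y)`. -/
theorem stmt_13 (p ε : ℝ) (hp0 : 0 < p) (hp1 : p < 1) (hp2 : p ≠ 1 / 2)
    (hε0 : 0 < ε) (hε1 : ε < 1)
    (J K lam : ℝ)
    (hJ : J = (1 / 2) * Real.log ((1 - p) / p))
    (hK : K = (1 / 2) * Real.log ((1 - ε) / ε))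
    (hlam : lam = 4 * Real.cosh J * Real.cosh K)
    (A B : ℝ → ℝ)
    (hA : ∀ u, A u = (1 / 2) * Real.log (Real.cosh (u + J) / Real.cosh (u - J)))
    (hB : ∀ u, B u = (1 / 2) * Real.log (4 * Real.cosh (u + J) * Real.cosh (u - J)))
    (spin : Bool → ℝ) (hspin : ∀ b, spin b = if b then 1 else -1)
    (W : (ℕ → ℝ) → ℕ → ℕ → ℝ)
    (hW0 : ∀ (y : ℕ → ℝ) (n i : ℕ), n < i → W y n i = 0)
    (hWrec : ∀ (y : ℕ → ℝ) (n i : ℕ), i ≤ n → W y n i = K * y i + A (W y n (i + 1)))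
    (wlim : (ℕ → ℝ) → ℕ → ℝ)
    (hwlim : ∀ (y : ℕ → ℝ) (i : ℕ),
      Filter.Tendsto (fun n => W y n i) Filter.atTop (nhds (wlim y i)))
    (g : (ℕ → ℝ) → ℝ)
    (hg : ∀ y : ℕ → ℝ,
      g y = (1 / lam) * Real.cosh (wlim y 0) * Real.exp (B (wlim y 1))
              / Real.cosh (wlim y 1)) :
    (∀ y : ℕ → ℝ, (∀ i, y i = 1 ∨ y i = -1) → 0 < g y) ∧
    ∃ C > (0 : ℝ), ∃ ρ ∈ Set.Ioo (0 : ℝ) 1,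
      ∀ y : ℕ → ℝ, (∀ i, y i = 1 ∨ y i = -1) → ∀ m : ℕ,
        |(∑ x : Fin (m + 2) → Bool,
            Real.exp (J * ∑ i : Fin (m + 1), spin (x i.castSucc) * spin (x i.succ)
              + K * ∑ i : Fin (m + 2), spin (x i) * y i))
          / (lam * ∑ x : Fin (m + 1) → Bool,
            Real.exp (J * ∑ i : Fin m, spin (x i.castSucc) * spin (x i.succ)
              + K * ∑ i : Fin (m + 1), spin (x i) * y (1 + i)))
          - g y| ≤ C * ρ ^ (m + 1) :=
  stmt_13_general p hp0 hp1 hp2 J K lam hJ hlam A B hA hB spin hspin W hW0 hWrec wlim hwlim g hg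
end

section
/- Continued fraction representation: for y ∈ {−1,1}^{ℤ₊} set z_i = (1−2p)(1−2ε)·y_{i−1}·tanh(w_i(y)), q_i = (1−2p)·y_{i−1}·y_i, and b_i = 4ε(1−ε)·q_i for i ≥ 1. Then |z_{i+1}| < 1 (so 1 + z_{i+1} ≠ 0) and z_i = q_i − b_i/(1 + z_{i+1}) for every i ≥ 1; moreover 2·g(y) = 1 + z_1. -/
/-!
With `tanh J = 1 - 2p` and `tanh K = 1 - 2ε`, the map `A` is tanh-multiplication in disguise:
`A u = artanh (tanh u * tanh J)`. Since `A` is continuous, the limits satisfy the backward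
recursion `w_i = K y_i + A w_{i+1}`, and the addition formula for `tanh` turns it into a Möbius
recursion for `tanh w_i`, which is the continued fraction for `z_i`. For `g`, one has
`cosh (A w) * exp (B w) = cosh (w + J) + cosh (w - J) = 2 cosh J cosh w`, while
`cosh w_0 = cosh K * cosh (A w_1) * (1 + z_1)`.
-/

open Real Filter Topology

namespace Real

theorem cosh_add_eq_mul_one_add_tanh_mul (x y : ℝ) :
    cosh (x + y) = cosh x * cosh y * (1 + tanh x * tanh y) := by
  have hx := (cosh_pos x).ne'
  have hy := (cosh_pos y).ne'
  rw [cosh_add, tanh_eq_sinh_div_cosh, tanh_eq_sinh_div_cosh]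
  field_simp

theorem sinh_add_eq_mul_tanh_add (x y : ℝ) :
    sinh (x + y) = cosh x * cosh y * (tanh x + tanh y) := by
  have hx := (cosh_pos x).ne'
  have hy := (cosh_pos y).ne'
  rw [sinh_add, tanh_eq_sinh_div_cosh, tanh_eq_sinh_div_cosh]
  field_simp

theorem tanh_add (x y : ℝ) :
    tanh (x + y) = (tanh x + tanh y) / (1 + tanh x * tanh y) := by
  rw [tanh_eq_sinh_div_cosh, sinh_add_eq_mul_tanh_add, cosh_add_eq_mul_one_add_tanh_mul,
    mul_div_mul_left _ _ (mul_pos (cosh_pos x) (cosh_pos y)).ne']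

theorem abs_one_sub_two_mul_lt_one {p : ℝ} (hp0 : 0 < p) (hp1 : p < 1) : |1 - 2 * p| < 1 :=
  abs_lt.mpr ⟨by linarith, by linarith⟩

theorem artanh_one_sub_two_mul {p : ℝ} (hp0 : 0 < p) (hp1 : p < 1) :
    artanh (1 - 2 * p) = 1 / 2 * log ((1 - p) / p) := by
  rw [artanh_eq_half_log <|
    Set.Ioo_subset_Icc_self (abs_lt.mp (abs_one_sub_two_mul_lt_one hp0 hp1))]
  congr 2
  field_simp
  ring

theorem tanh_half_log_one_sub_div_s18 {p : ℝ} (hp0 : 0 < p) (hp1 : p < 1) :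
    tanh (1 / 2 * log ((1 - p) / p)) = 1 - 2 * p := by
  rw [← artanh_one_sub_two_mul hp0 hp1,
    tanh_artanh (abs_lt.mp (abs_one_sub_two_mul_lt_one hp0 hp1))]

theorem abs_tanh_mul_tanh_lt_one (u v : ℝ) : |tanh u * tanh v| < 1 := by
  rw [abs_mul]
  exact mul_lt_one_of_nonneg_of_lt_one_left (abs_nonneg _) (abs_tanh_lt_one u)
    (abs_tanh_lt_one v).le

theorem half_log_cosh_add_div_cosh_sub (u v : ℝ) :
    1 / 2 * log (cosh (u + v) / cosh (u - v)) = artanh (tanh u * tanh v) := by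
  rw [artanh_eq_half_log (Set.Ioo_subset_Icc_self (abs_lt.mp (abs_tanh_mul_tanh_lt_one u v))),
    sub_eq_add_neg u v,
    cosh_add_eq_mul_one_add_tanh_mul, cosh_add_eq_mul_one_add_tanh_mul, cosh_neg, tanh_neg,
    mul_div_mul_left _ _ (mul_pos (cosh_pos u) (cosh_pos v)).ne', mul_neg, sub_eq_add_neg]

theorem tanh_half_log_cosh_add_div_cosh_sub (u v : ℝ) :
    tanh (1 / 2 * log (cosh (u + v) / cosh (u - v))) = tanh u * tanh v := by
  rw [half_log_cosh_add_div_cosh_sub, tanh_artanh (abs_lt.mp (abs_tanh_mul_tanh_lt_one u v))]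

theorem exp_half_log_div_add_half_log_mul {a b : ℝ} (ha : 0 < a) (hb : 0 < b) :
    exp (1 / 2 * log (a / b) + 1 / 2 * log (4 * a * b)) = 2 * a := by
  rw [← mul_add, ← log_mul (by positivity) (by positivity),
    show a / b * (4 * a * b) = (2 * a) ^ 2 by field_simp; ring, log_pow, Nat.cast_ofNat,
    ← mul_assoc, one_div_mul_cancel two_ne_zero, one_mul, exp_log (by positivity)]

theorem cosh_half_log_div_mul_exp_half_log_mul {a b : ℝ} (ha : 0 < a) (hb : 0 < b) :
    cosh (1 / 2 * log (a / b)) * exp (1 / 2 * log (4 * a * b)) = a + b := by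
  have hneg : -(1 / 2 * log (a / b)) = 1 / 2 * log (b / a) := by
    rw [← inv_div b a, log_inv, mul_neg, neg_neg]
  rw [cosh_eq, div_mul_eq_mul_div, add_mul, ← exp_add, ← exp_add, hneg,
    exp_half_log_div_add_half_log_mul ha hb, show 4 * a * b = 4 * b * a by ring,
    exp_half_log_div_add_half_log_mul hb ha]
  ring

theorem cosh_half_log_cosh_add_div_cosh_sub_mul_exp (u v : ℝ) :
    cosh (1 / 2 * log (cosh (u + v) / cosh (u - v)))
      * exp (1 / 2 * log (4 * cosh (u + v) * cosh (u - v))) = 2 * cosh v * cosh u := by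
  rw [cosh_half_log_div_mul_exp_half_log_mul (cosh_pos _) (cosh_pos _), cosh_add, cosh_sub]
  ring

theorem tanh_mul_of_eq_one_or_eq_neg_one {s : ℝ} (hs : s = 1 ∨ s = -1) (x : ℝ) :
    tanh (x * s) = s * tanh x := by
  rcases hs with rfl | rfl <;> simp [tanh_neg]

theorem cosh_mul_of_eq_one_or_eq_neg_one {s : ℝ} (hs : s = 1 ∨ s = -1) (x : ℝ) :
    cosh (x * s) = cosh x := by
  rcases hs with rfl | rfl <;> simp

theorem continuous_half_log_cosh_add_div_cosh_sub (v : ℝ) :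
    Continuous fun u => 1 / 2 * log (cosh (u + v) / cosh (u - v)) := by
  fun_prop (disch := intro; positivity)

end Real

theorem eq_apply_of_tendsto_of_backward_recursion {X : Type*} [TopologicalSpace X] [T2Space X]
    {F : ℕ → X → X} (hF : ∀ i, Continuous (F i)) {W : ℕ → ℕ → X} {w : ℕ → X}
    (hW : ∀ n i, i ≤ n → W n i = F i (W n (i + 1)))
    (hw : ∀ i, Tendsto (fun n => W n i) atTop (𝓝 (w i))) (i : ℕ) :
    w i = F i (w (i + 1)) :=
  tendsto_nhds_unique (hw i) <| ((hF i).tendsto _).comp (hw (i + 1)) |>.congr' <|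
    eventually_atTop.mpr ⟨i, fun n hn => (hW n i hn).symm⟩

theorem continued_fraction_step {a c s y t : ℝ} (hy : y = 1 ∨ y = -1)
    (hD : 1 + a * c * y * t ≠ 0) :
    a * c * s * ((y * c + t * a) / (1 + y * c * (t * a)))
      = a * s * y - (1 - c ^ 2) * (a * s * y) / (1 + a * c * y * t) := by
  have hy2 : y ^ 2 = 1 := by rcases hy with rfl | rfl <;> norm_num
  have hD' : 1 + y * c * (t * a) ≠ 0 := by convert hD using 1; ring
  field_simp
  linear_combination (-(a ^ 2 * c * s * t)) * hy2

section BackwardRecursion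

variable {J K : ℝ} {A : ℝ → ℝ} {y w : ℕ → ℝ}

theorem tanh_eq_of_backward_recursion (hA : ∀ u, tanh (A u) = tanh u * tanh J)
    (hy : ∀ i, y i = 1 ∨ y i = -1) (hw : ∀ i, w i = K * y i + A (w (i + 1))) (i : ℕ) :
    tanh (w i) = (y i * tanh K + tanh (w (i + 1)) * tanh J)
      / (1 + y i * tanh K * (tanh (w (i + 1)) * tanh J)) := by
  rw [hw i, tanh_add, tanh_mul_of_eq_one_or_eq_neg_one (hy i), hA]

theorem cosh_eq_of_backward_recursion (hA : ∀ u, tanh (A u) = tanh u * tanh J)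
    (hy : ∀ i, y i = 1 ∨ y i = -1) (hw : ∀ i, w i = K * y i + A (w (i + 1))) (i : ℕ) :
    cosh (w i) = cosh K * cosh (A (w (i + 1)))
      * (1 + y i * tanh K * (tanh (w (i + 1)) * tanh J)) := by
  rw [hw i, cosh_add_eq_mul_one_add_tanh_mul, tanh_mul_of_eq_one_or_eq_neg_one (hy i),
    cosh_mul_of_eq_one_or_eq_neg_one (hy i), hA]

end BackwardRecursion

theorem stmt_18_general (p ε : ℝ) (hp0 : 0 < p) (hp1 : p < 1)
    (hε0 : 0 < ε) (hε1 : ε < 1)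
    (J K lam : ℝ)
    (hJ : J = (1 / 2) * Real.log ((1 - p) / p))
    (hK : K = (1 / 2) * Real.log ((1 - ε) / ε))
    (hlam : lam = 4 * Real.cosh J * Real.cosh K)
    (A B : ℝ → ℝ)
    (hA : ∀ u, A u = (1 / 2) * Real.log (Real.cosh (u + J) / Real.cosh (u - J)))
    (hB : ∀ u, B u = (1 / 2) * Real.log (4 * Real.cosh (u + J) * Real.cosh (u - J)))
    (y : ℕ → ℝ) (hy : ∀ i, y i = 1 ∨ y i = -1)
    (W : ℕ → ℕ → ℝ)
    (hWrec : ∀ n i : ℕ, i ≤ n → W n i = K * y i + A (W n (i + 1)))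
    (wlim : ℕ → ℝ)
    (hwlim : ∀ i : ℕ, Filter.Tendsto (fun n => W n i) Filter.atTop (nhds (wlim i)))
    (g : ℝ)
    (hg : g = (1 / lam) * Real.cosh (wlim 0) * Real.exp (B (wlim 1))
                / Real.cosh (wlim 1))
    (z q b : ℕ → ℝ)
    (hz : ∀ i : ℕ, 1 ≤ i → z i = (1 - 2 * p) * (1 - 2 * ε) * y (i - 1) * Real.tanh (wlim i))
    (hq : ∀ i : ℕ, 1 ≤ i → q i = (1 - 2 * p) * y (i - 1) * y i)
    (hb : ∀ i : ℕ, 1 ≤ i → b i = 4 * ε * (1 - ε) * q i) :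
    (∀ i : ℕ, 1 ≤ i → |z (i + 1)| < 1 ∧ z i = q i - b i / (1 + z (i + 1))) ∧
    2 * g = 1 + z 1 := by
  have htJ : tanh J = 1 - 2 * p := hJ ▸ tanh_half_log_one_sub_div_s18 hp0 hp1
  have htK : tanh K = 1 - 2 * ε := hK ▸ tanh_half_log_one_sub_div_s18 hε0 hε1
  have htA : ∀ u, tanh (A u) = tanh u * tanh J := fun u => by
    rw [hA, tanh_half_log_cosh_add_div_cosh_sub]
  have hrec : ∀ i, wlim i = K * y i + A (wlim (i + 1)) :=
    eq_apply_of_tendsto_of_backward_recursion (fun i => continuous_const.add <|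
      funext hA ▸ continuous_half_log_cosh_add_div_cosh_sub J) hWrec hwlim
  have hz' : ∀ i, z (i + 1) = tanh J * tanh K * y i * tanh (wlim (i + 1)) := fun i => by
    rw [hz (i + 1) (Nat.le_add_left 1 i), Nat.add_sub_cancel, htJ, htK]
  have hz_lt : ∀ i, |z (i + 1)| < 1 := fun i => by
    rw [hz' i, abs_mul, abs_mul _ (y i), show |y i| = 1 by rcases hy i with h | h <;> simp [h],
      mul_one]
    exact mul_lt_one_of_nonneg_of_lt_one_left (abs_nonneg _) (abs_tanh_mul_tanh_lt_one J K)
      (abs_tanh_lt_one _).le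
  refine ⟨fun i hi => ⟨hz_lt i, ?_⟩, ?_⟩
  · obtain ⟨i, rfl⟩ := Nat.exists_eq_add_of_le' hi
    have hD : 1 + z (i + 1 + 1) ≠ 0 := by linarith [(abs_lt.mp (hz_lt (i + 1))).1]
    rw [hz' (i + 1)] at hD ⊢
    rw [hq _ hi, hb _ hi, hq _ hi, Nat.add_sub_cancel, hz' i,
      tanh_eq_of_backward_recursion htA hy hrec, ← htJ,
      show 4 * ε * (1 - ε) = 1 - tanh K ^ 2 by rw [htK]; ring]
    exact continued_fraction_step (hy (i + 1)) hD
  · have hJ0 := (cosh_pos J).ne'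
    have hK0 := (cosh_pos K).ne'
    have hw0 := (cosh_pos (wlim 1)).ne'
    calc 2 * g = cosh (A (wlim 1)) * exp (B (wlim 1)) / (2 * cosh J * cosh (wlim 1))
          * (1 + y 0 * tanh K * (tanh (wlim 1) * tanh J)) := by
          rw [hg, hlam, cosh_eq_of_backward_recursion htA hy hrec]
          field_simp
          ring
      _ = 1 + z 1 := by
          rw [hA, hB, cosh_half_log_cosh_add_div_cosh_sub_mul_exp, div_self (by positivity), one_mul, hz' 0]
          ring

/-- continued fraction representation: for `y ∈ {−1,1}^{ℤ₊}` set
`z_i = (1−2p)(1−2ε)·y_{i−1}·tanh(w_i(y))`, `q_i = (1−2p)·y_{i−1}·y_i`, and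
`b_i = 4ε(1−ε)·q_i` for `i ≥ 1`. Then `|z_{i+1}| < 1` (so `1 + z_{i+1} ≠ 0`) and
`z_i = q_i − b_i/(1 + z_{i+1})` for every `i ≥ 1`; moreover `2·g(y) = 1 + z_1`.
Here `W n i = w_i^{(n)}(y)`, `wlim i = w_i(y)`, and
`g(y) = (1/λ)·cosh(w_0(y))·exp(B(w_1(y)))/cosh(w_1(y))`. -/
theorem stmt_18 (p ε : ℝ) (hp0 : 0 < p) (hp1 : p < 1) (hp2 : p ≠ 1 / 2)
    (hε0 : 0 < ε) (hε1 : ε < 1) (hε2 : ε ≠ 1 / 2)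
    (J K lam : ℝ)
    (hJ : J = (1 / 2) * Real.log ((1 - p) / p))
    (hK : K = (1 / 2) * Real.log ((1 - ε) / ε))
    (hlam : lam = 4 * Real.cosh J * Real.cosh K)
    (A B : ℝ → ℝ)
    (hA : ∀ u, A u = (1 / 2) * Real.log (Real.cosh (u + J) / Real.cosh (u - J)))
    (hB : ∀ u, B u = (1 / 2) * Real.log (4 * Real.cosh (u + J) * Real.cosh (u - J)))
    (y : ℕ → ℝ) (hy : ∀ i, y i = 1 ∨ y i = -1)
    (W : ℕ → ℕ → ℝ)
    (hW0 : ∀ n i : ℕ, n < i → W n i = 0)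
    (hWrec : ∀ n i : ℕ, i ≤ n → W n i = K * y i + A (W n (i + 1)))
    (wlim : ℕ → ℝ)
    (hwlim : ∀ i : ℕ, Filter.Tendsto (fun n => W n i) Filter.atTop (nhds (wlim i)))
    (g : ℝ)
    (hg : g = (1 / lam) * Real.cosh (wlim 0) * Real.exp (B (wlim 1))
                / Real.cosh (wlim 1))
    (z q b : ℕ → ℝ)
    (hz : ∀ i : ℕ, 1 ≤ i → z i = (1 - 2 * p) * (1 - 2 * ε) * y (i - 1) * Real.tanh (wlim i))
    (hq : ∀ i : ℕ, 1 ≤ i → q i = (1 - 2 * p) * y (i - 1) * y i)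
    (hb : ∀ i : ℕ, 1 ≤ i → b i = 4 * ε * (1 - ε) * q i) :
    (∀ i : ℕ, 1 ≤ i → |z (i + 1)| < 1 ∧ z i = q i - b i / (1 + z (i + 1))) ∧
    2 * g = 1 + z 1 :=
  stmt_18_general p ε hp0 hp1 hε0 hε1 J K lam hJ hK hlam A B hA hB y hy W hWrec wlim hwlim g hg z q
    b hz hq hb
end
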